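/- Let a set of jobs with processing times p_1,…,p_k and weights w_1,…,w_k be both processing-time-inclusive and weight-inclusive, and let S be the feasible synchronized schedule executing these jobs in the order j_1,…,j_k on a single shared processor. Let S' be the synchronized schedule on the same processor that executes k jobs in the reversed order, where the job in position i has processing time w_{k+1−i} and weight p_{k+1−i}. Then S' is feasible and the total weighted overlaps of S and S' are equal; that is, (1/2)·Σ_{ℓ} p_ℓ w_ℓ − Σ_{ℓ} Σ_{t<ℓ} p_t w_ℓ/2^{ℓ+1−t} = (1/2)·Σ_{ℓ} p'_ℓ w'_ℓ − Σ_{ℓ} Σ_{t<ℓ} p'_t w'_ℓ/2^{ℓ+1−t} with p'_i = w_{k+1−i} and w'_i = p_{k+1−i}. -/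

import Mathlib

/-- Start times on a shared processor for a sequence of processing times `q`:
`Tseq q 0 = 0` and `Tseq q (i+1) = (Tseq q i + q_i)/2`; job `i` (0-indexed)
occupies the shared processor during `(Tseq q i, Tseq q (i+1))`. -/
noncomputable def Tseq (q : List ℝ) : ℕ → ℝ
  | 0 => 0
  | i + 1 => (Tseq q i + q.getD i 0) / 2

/-- A sequence of processing times is feasible on a shared processor if every
job is long enough: `q_i > T_i`. -/
def ListFeasible (q : List ℝ) : Prop :=
  ∀ i < q.length, Tseq q i < q.getD i 0

/-- Total weighted overlap of one shared processor executing jobs with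
processing times `q` and weights `v` (in this order): the overlap of the `i`-th
job is `(q_i - T_i)/2`. -/
noncomputable def listOverlap (q v : List ℝ) : ℝ :=
  ∑ i ∈ Finset.range q.length, v.getD i 0 * (q.getD i 0 - Tseq q i) / 2

/-- A synchronized schedule: each of the `m` shared processors gets a finite
sequence of distinct jobs, and each job appears on at most one shared processor
(jobs appearing nowhere execute on their private processors only). -/
structure SyncSchedule (J : Type) (m : ℕ) where
  seq : Fin m → List J
  nodup : ∀ i, (seq i).Nodup
  disj : ∀ i i' j, j ∈ seq i → j ∈ seq i' → i = i'

namespace SyncSchedule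

variable {J : Type} {m : ℕ}

/-- Feasibility of a synchronized schedule for processing times `p`. -/
def Feasible (p : J → ℝ) (S : SyncSchedule J m) : Prop :=
  ∀ i, ListFeasible ((S.seq i).map p)

/-- Total weighted overlap of a synchronized schedule. -/
noncomputable def Omega (p w : J → ℝ) (S : SyncSchedule J m) : ℝ :=
  ∑ i, listOverlap ((S.seq i).map p) ((S.seq i).map w)

/-- A feasible synchronized schedule is optimal if it maximizes the total
weighted overlap among all feasible synchronized schedules. -/
def Optimal (p w : J → ℝ) (S : SyncSchedule J m) : Prop :=
  S.Feasible p ∧ ∀ S' : SyncSchedule J m, S'.Feasible p → S'.Omega p w ≤ S.Omega p w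

end SyncSchedule

/-- A finite collection of processing times (given as a list `q`) is
*processing-time-inclusive* if, for its ascending sort `s = [q_1, …, q_k]`,
`Σ_{ℓ=1}^{k-1} q_{ℓ+1} / 2^(k-ℓ) < q_1`; i.e. the makespan of all but the
shortest job scheduled in ascending order is shorter than the shortest job. -/
def PTInclusive (q : List ℝ) : Prop :=
  ∃ s : List ℝ, s.Perm q ∧ s.Pairwise (· ≤ ·) ∧
    ∑ ℓ ∈ Finset.range (s.length - 1), s.getD (ℓ + 1) 0 / 2 ^ (s.length - 1 - ℓ)
      < s.getD 0 0

/-!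
Unfolding the recursion gives `T_i = Σ_{t<i} q_t / 2 ^ (i - t)`.

The overlap is then the bilinear form `½ Σ_i q_i v_i - Σ_{t<i} q_t v_i / 2 ^ (i + 1 - t)`, whose
kernel only depends on `i - t`; reversing both sequences and exchanging their roles maps the pair
`(i, t)` to `(n - 1 - t, n - 1 - i)`, which preserves `i - t`, so the overlap is unchanged.

An inclusive sequence of nonnegative jobs is feasible in any order: rotating it so that job `i`
comes first moves the first `i` jobs to the end, so `T_i + q_i / 2 ^ n` is at most the makespan of
a permutation of the jobs. By the rearrangement inequality the ascending order
`s_1 ≤ ⋯ ≤ s_n` has the largest makespan, namely `s_1 / 2 ^ n` plus the inclusivity sum, which is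
`< s_1 ≤ q_i`.
-/

open Finset

lemma Tseq_eq_sum (q : List ℝ) (n : ℕ) :
    Tseq q n = ∑ t ∈ range n, q.getD t 0 / 2 ^ (n - t) := by
  induction n with
  | zero => simp [Tseq]
  | succ n ih =>
    rw [Tseq, ih, sum_range_succ, Nat.add_sub_cancel_left, pow_one, add_div, sum_div]
    congr 1
    refine sum_congr rfl fun t ht => ?_
    rw [Nat.sub_add_comm (mem_range.mp ht).le, pow_succ, div_div]

lemma Tseq_append_of_le (a b : List ℝ) {m : ℕ} (hm : m ≤ a.length) :
    Tseq (a ++ b) m = Tseq a m := by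
  induction m with
  | zero => rfl
  | succ m ih => rw [Tseq, Tseq, ih (by omega), List.getD_append _ _ _ _ (by omega)]

lemma Tseq_append (a b : List ℝ) (j : ℕ) :
    Tseq (a ++ b) (a.length + j) = Tseq a a.length / 2 ^ j + Tseq b j := by
  induction j with
  | zero => simp [Tseq_append_of_le, Tseq]
  | succ j ih =>
    rw [← add_assoc, Tseq, Tseq, ih, List.getD_append_right _ _ _ _ (by omega),
      Nat.add_sub_cancel_left, pow_succ]
    ring

lemma Tseq_ofFn {n : ℕ} (g : Fin n → ℝ) :
    Tseq (List.ofFn g) n = ∑ u, g u / 2 ^ (n - u) := by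
  rw [Tseq_eq_sum, ← Fin.sum_univ_eq_sum_range (fun t => (List.ofFn g).getD t 0 / 2 ^ (n - t))]
  simp

lemma Tseq_ofFn_le_Tseq_ofFn_sort {n : ℕ} (g : Fin n → ℝ) :
    Tseq (List.ofFn g) n ≤ Tseq (List.ofFn (g ∘ Tuple.sort g)) n := by
  have hc : Monotone fun u : Fin n => 1 / (2:ℝ) ^ (n - u) := fun u v huv =>
    one_div_le_one_div_of_le (by positivity) (pow_le_pow_right₀ one_le_two (by omega))
  have := (hc.monovary (Tuple.monotone_sort g)).sum_mul_comp_perm_le_sum_mul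
    (σ := (Tuple.sort g)⁻¹)
  simpa [Tseq_ofFn, div_eq_inv_mul] using this

lemma Tseq_length_le_of_perm_of_sorted {l s : List ℝ} (hls : l.Perm s)
    (hs : s.Pairwise (· ≤ ·)) : Tseq l l.length ≤ Tseq s s.length := by
  have hsort : s = List.ofFn (l.get ∘ Tuple.sort l.get) := by
    have hperm : l.Perm (List.ofFn (l.get ∘ Tuple.sort l.get)) := by
      simpa using ((Tuple.sort l.get).ofFn_comp_perm l.get).symm
    exact (hls.symm.trans hperm).eq_of_pairwise' hs
      (Tuple.monotone_sort l.get).sortedLE_ofFn.pairwise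
  have := Tseq_ofFn_le_Tseq_ofFn_sort l.get
  rw [List.ofFn_get, ← hsort] at this
  rwa [← hls.length_eq]

lemma getD_nonneg {q : List ℝ} (hq : ∀ a ∈ q, 0 ≤ a) (i : ℕ) : 0 ≤ q.getD i 0 := by
  rcases lt_or_ge i q.length with hi | hi
  · rw [List.getD_eq_getElem _ _ hi]
    exact hq _ (List.getElem_mem hi)
  · rw [List.getD_eq_default _ _ hi]

lemma getD_zero_div_le_Tseq {q : List ℝ} (hq : ∀ a ∈ q, 0 ≤ a) {m : ℕ} (hm : 0 < m) :
    q.getD 0 0 / 2 ^ m ≤ Tseq q m := by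
  rw [Tseq_eq_sum]
  exact single_le_sum (f := fun t => q.getD t 0 / 2 ^ (m - t))
    (fun t _ => div_nonneg (getD_nonneg hq t) (by positivity)) (mem_range.mpr hm)

lemma Tseq_add_getD_div_le_Tseq_rotate {q : List ℝ} (hq : ∀ a ∈ q, 0 ≤ a) {i : ℕ}
    (hi : i < q.length) :
    Tseq q i + q.getD i 0 / 2 ^ q.length ≤ Tseq (q.rotate i) q.length := by
  have htake : (q.take i).length = i := List.length_take_of_le hi.le
  have hdrop : (q.drop i).length = q.length - i := List.length_drop
  have hhead := getD_zero_div_le_Tseq (q := q.drop i)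
    (fun a ha => hq a (List.mem_of_mem_drop ha)) (m := q.length - i) (by omega)
  rw [show (q.drop i).getD 0 0 = q.getD i 0 by simp [List.getD_eq_getElem?_getD]] at hhead
  have hTi : Tseq (q.take i) i = Tseq q i := by
    rw [← Tseq_append_of_le (q.take i) (q.drop i) htake.ge, List.take_append_drop]
  have hrot := Tseq_append (q.drop i) (q.take i) i
  rw [hdrop, Nat.sub_add_cancel hi.le, hTi, ← List.rotate_eq_drop_append_take hi.le] at hrot
  calc Tseq q i + q.getD i 0 / 2 ^ q.length
      = Tseq q i + q.getD i 0 / 2 ^ (q.length - i) / 2 ^ i := by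
        rw [div_div, ← pow_add, Nat.sub_add_cancel hi.le]
    _ ≤ Tseq q i + Tseq (q.drop i) (q.length - i) / 2 ^ i := by gcongr
    _ = Tseq (q.rotate i) q.length := by rw [hrot, add_comm]

lemma Tseq_length_eq_getD_zero_div_add {s : List ℝ} (hs : s ≠ []) :
    Tseq s s.length = s.getD 0 0 / 2 ^ s.length +
      ∑ ℓ ∈ range (s.length - 1), s.getD (ℓ + 1) 0 / 2 ^ (s.length - 1 - ℓ) := by
  obtain ⟨n, hn⟩ := Nat.exists_eq_add_one_of_ne_zero (List.length_pos_iff.mpr hs).ne'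
  rw [Tseq_eq_sum, hn, sum_range_succ', add_comm, Nat.sub_zero, Nat.add_sub_cancel]
  congr 1
  refine sum_congr rfl fun ℓ _ => ?_
  rw [Nat.add_sub_add_right]

lemma getD_zero_le_of_pairwise {α : Type*} [Preorder α] {s : List α} (hs : s.Pairwise (· ≤ ·))
    {x : α} (hx : x ∈ s) (d : α) : s.getD 0 d ≤ x := by
  cases s with
  | nil => simp at hx
  | cons a s =>
    rcases List.mem_cons.mp hx with rfl | hx
    · exact le_rfl
    · exact List.rel_of_pairwise_cons hs hx

theorem listFeasible_of_ptInclusive {q : List ℝ} (hq : ∀ a ∈ q, 0 ≤ a) (h : PTInclusive q) :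
    ListFeasible q := by
  obtain ⟨s, hsq, hs, hlt⟩ := h
  intro i hi
  have hlen : s.length = q.length := hsq.length_eq
  have hrot := Tseq_add_getD_div_le_Tseq_rotate hq hi
  have hsort := Tseq_length_le_of_perm_of_sorted ((q.rotate_perm i).trans hsq.symm) hs
  have hsplit := Tseq_length_eq_getD_zero_div_add (s := s) (List.ne_nil_of_length_pos (by omega))
  have hmin : s.getD 0 0 ≤ q.getD i 0 := by
    rw [List.getD_eq_getElem _ _ hi]
    exact getD_zero_le_of_pairwise hs (hsq.mem_iff.mpr (List.getElem_mem hi)) 0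
  have hmin_div : s.getD 0 0 / 2 ^ q.length ≤ q.getD i 0 / 2 ^ q.length := by gcongr
  rw [List.length_rotate] at hsort
  rw [hlen] at hsort hsplit hlt
  linarith

lemma PTInclusive.perm {q q' : List ℝ} (h : PTInclusive q) (hq : q.Perm q') : PTInclusive q' :=
  let ⟨s, hs, hsorted, hlt⟩ := h
  ⟨s, hs.trans hq, hsorted, hlt⟩

lemma listOverlap_eq (q v : List ℝ) :
    listOverlap q v = (∑ i ∈ range q.length, q.getD i 0 * v.getD i 0) / 2
      - ∑ i ∈ range q.length, ∑ t ∈ range i, q.getD t 0 * v.getD i 0 / 2 ^ (i + 1 - t) := by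
  rw [listOverlap, sum_div, ← sum_sub_distrib]
  refine sum_congr rfl fun i _ => ?_
  rw [Tseq_eq_sum, mul_sub, sub_div, mul_sum, sum_div, mul_comm]
  congr 1
  refine sum_congr rfl fun t ht => ?_
  rw [Nat.sub_add_comm (mem_range.mp ht).le, pow_succ]
  ring

lemma sum_range_sum_range_reflect {M : Type*} [AddCommMonoid M] (n : ℕ) (f : ℕ → ℕ → M) :
    ∑ i ∈ range n, ∑ t ∈ range i, f i t
      = ∑ i ∈ range n, ∑ t ∈ range i, f (n - 1 - t) (n - 1 - i) := by
  rw [sum_sigma', sum_sigma']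
  refine sum_nbij' (fun p => ⟨n - 1 - p.2, n - 1 - p.1⟩) (fun p => ⟨n - 1 - p.2, n - 1 - p.1⟩)
    ?_ ?_ ?_ ?_ ?_ <;>
  rintro ⟨i, t⟩ h <;>
  simp only [mem_sigma, mem_range, Sigma.mk.injEq, heq_eq_eq] at h ⊢ <;>
  first | omega | (congr <;> omega)

lemma getD_reverse_sub {α : Type*} {l : List α} {n i : ℕ} (hn : l.length = n) (hi : i < n)
    (d : α) : l.reverse.getD (n - 1 - i) d = l.getD i d := by
  rw [List.getD_reverse _ (by omega), hn, Nat.sub_sub_self (by omega)]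

lemma listOverlap_reverse {q v : List ℝ} (h : q.length = v.length) :
    listOverlap q v = listOverlap v.reverse q.reverse := by
  rw [listOverlap_eq, listOverlap_eq, List.length_reverse, ← h]
  congr 1
  · conv_rhs => rw [← sum_range_reflect]
    refine congrArg (· / 2) (sum_congr rfl fun i hi => ?_)
    rw [getD_reverse_sub h.symm (mem_range.mp hi), getD_reverse_sub rfl (mem_range.mp hi),
      mul_comm]
  · conv_rhs => rw [sum_range_sum_range_reflect]
    refine sum_congr rfl fun i hi => sum_congr rfl fun t ht => ?_
    have hi := mem_range.mp hi
    have ht := mem_range.mp ht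
    rw [getD_reverse_sub h.symm hi, getD_reverse_sub rfl (ht.trans hi), mul_comm]
    congr 2
    omega

theorem reverse_dual_schedule_same_overlap
    (q v : List ℝ) (k : ℕ) (hq : q.length = k) (hv : v.length = k)
    (hvpos : ∀ a ∈ v, (0:ℝ) < a)
    (hPTIv : PTInclusive v) :
    ListFeasible v.reverse ∧ listOverlap q v = listOverlap v.reverse q.reverse :=
  ⟨listFeasible_of_ptInclusive (fun a ha => (hvpos a (List.mem_reverse.mp ha)).le)
      (hPTIv.perm (List.reverse_perm v).symm),
    listOverlap_reverse (hq.trans hv.symm)⟩
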